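/- Let G be a connected graph on vertex set [n]. For each break divisor D on G (viewed as a point in ℤ^n) and each nonempty proper S ⊂ [n] with G[S] and G[S̄] connected, the polynomial ∏_{i = g(G[S])}^{g(G) − g(G[S̄])} (x_S − i), where x_S = Σ_{j∈S} x_j, vanishes on the set of break divisors of G; moreover its top-degree homogeneous component is x_S^{d(S)}. -/

import Mathlib

/-- A finite multigraph without loops. -/
structure Multigraph (V E : Type) where
  ends : E → Sym2 V
  loopless : ∀ e, ¬ (ends e).IsDiag

namespace Multigraph

variable {V E : Type}

/-- The underlying simple graph. -/
def simple (G : Multigraph V E) : SimpleGraph V where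
  Adj u v := u ≠ v ∧ ∃ e, u ∈ G.ends e ∧ v ∈ G.ends e
  symm := by
    constructor
    intro u v h
    exact ⟨h.1.symm, h.2.imp fun e he => ⟨he.2, he.1⟩⟩
  loopless := by constructor; intro u h; exact h.1 rfl

/-- The simple graph using only edges from a subset `F ⊆ E`. -/
def subSimple (G : Multigraph V E) (F : Set E) : SimpleGraph V where
  Adj u v := u ≠ v ∧ ∃ e ∈ F, u ∈ G.ends e ∧ v ∈ G.ends e
  symm := by
    constructor
    intro u v h
    exact ⟨h.1.symm, h.2.imp fun e he => ⟨he.1, he.2.2, he.2.1⟩⟩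
  loopless := by constructor; intro u h; exact h.1 rfl

/-- Genus `g(G) = |E| - |V| + 1`. -/
def genus (G : Multigraph V E) [Fintype V] [Fintype E] : ℤ :=
  (Fintype.card E : ℤ) - (Fintype.card V : ℤ) + 1

/-- Edges of the induced subgraph `G[S]`. -/
def insideEdges (G : Multigraph V E) (S : Finset V) : Set E :=
  {e | ∀ v ∈ G.ends e, v ∈ S}

/-- Genus of the induced subgraph `G[S]`. -/
noncomputable def inducedGenus (G : Multigraph V E) (S : Finset V) : ℤ :=
  ((G.insideEdges S).ncard : ℤ) - (S.card : ℤ) + 1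

/-- The edge cut `∂(S)`. -/
def cutEdges (G : Multigraph V E) (S : Finset V) : Set E :=
  {e | (∃ u ∈ G.ends e, u ∈ S) ∧ ∃ v ∈ G.ends e, v ∉ S}

/-- `D` is a break divisor on `G`: an effective divisor of degree `g(G)` whose
restriction to every connected subgraph `H = (S, F)` has degree at least
`g(H) = |F| - |S| + 1`. -/
def IsBreakDivisor (G : Multigraph V E) [Fintype V] [Fintype E]
    (D : V → ℤ) : Prop :=
  (∀ v, 0 ≤ D v) ∧ (∑ v, D v = G.genus) ∧
    ∀ (S : Finset V) (F : Set E),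
      (∀ e ∈ F, ∀ v ∈ G.ends e, v ∈ S) →
      ((G.subSimple F).induce (S : Set V)).Connected →
      (F.ncard : ℤ) - (S.card : ℤ) + 1 ≤ ∑ v ∈ S, D v

end Multigraph

/-!
Every edge of `G` lies in `G[S]`, in `G[S̄]`, or in the cut `∂(S)`, so the number of integers in
`[g(G[S]), g(G) - g(G[S̄])]` is `g(G) - g(G[S̄]) - g(G[S]) + 1 = d(S)`. A break divisor `D` has
degree at least `g(G[S])` on the connected subgraph `G[S]` and at least `g(G[S̄])` on `G[S̄]`;
as its total degree is `g(G)`, the value `x_S(D)` lies in that interval and kills one factor.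
The product of `d(S)` factors `x_S - i`, with `x_S` a nonzero linear form, has degree `d(S)`
and top-degree component `x_S^{d(S)}`.
-/

namespace MvPolynomial

variable {σ R ι : Type*} [CommRing R]

theorem IsHomogeneous.homogeneousComponent_mul {p q : MvPolynomial σ R} {i n : ℕ}
    (hp : p.IsHomogeneous i) (h : i ≤ n) :
    homogeneousComponent n (p * q) = p * homogeneousComponent (n - i) q := by
  let _ := gradedAlgebra (σ := σ) (R := R)
  rw [← decomposition.decompose'_apply, ← decomposition.decompose'_apply]
  exact DirectSum.coe_decompose_mul_of_left_mem_of_le _ ((mem_homogeneousSubmodule i p).mpr hp) h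

theorem totalDegree_prod_sub_C_le {p : MvPolynomial σ R} (hp : p.totalDegree ≤ 1)
    (t : Finset ι) (c : ι → R) : (∏ i ∈ t, (p - C (c i))).totalDegree ≤ t.card := by
  refine (totalDegree_finsetProd t _).trans ?_
  simpa using Finset.sum_le_sum fun i (_ : i ∈ t) => (totalDegree_sub_C_le p (c i)).trans hp

theorem homogeneousComponent_card_prod_sub_C {p : MvPolynomial σ R} (hp : p.IsHomogeneous 1)
    (t : Finset ι) (c : ι → R) :
    homogeneousComponent t.card (∏ i ∈ t, (p - C (c i))) = p ^ t.card := by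
  classical
  induction t using Finset.induction_on with
  | empty => simp
  | insert a t ha ih =>
    have hlow : (∏ i ∈ t, (p - C (c i))).totalDegree < t.card + 1 :=
      Nat.lt_succ_of_le (totalDegree_prod_sub_C_le hp.totalDegree_le t c)
    rw [Finset.prod_insert ha, Finset.card_insert_of_notMem ha, sub_mul, map_sub,
      hp.homogeneousComponent_mul (Nat.le_add_left 1 _), Nat.add_sub_cancel, ih,
      homogeneousComponent_C_mul, homogeneousComponent_eq_zero _ _ hlow, mul_zero, sub_zero,
      pow_succ']

theorem totalDegree_prod_sub_C [IsDomain R] {p : MvPolynomial σ R} (hp : p.IsHomogeneous 1)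
    (hp0 : p ≠ 0) (t : Finset ι) (c : ι → R) :
    (∏ i ∈ t, (p - C (c i))).totalDegree = t.card := by
  refine le_antisymm (totalDegree_prod_sub_C_le hp.totalDegree_le t c) (not_lt.mp fun h => ?_)
  apply pow_ne_zero t.card hp0
  rw [← homogeneousComponent_card_prod_sub_C hp t c, homogeneousComponent_eq_zero _ _ h]

theorem isHomogeneous_sum_X (S : Finset σ) : (∑ j ∈ S, X j : MvPolynomial σ R).IsHomogeneous 1 :=
  IsHomogeneous.sum S _ 1 fun j _ => isHomogeneous_X R j

theorem sum_X_ne_zero [Nontrivial R] {S : Finset σ} (hS : S.Nonempty) :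
    (∑ j ∈ S, X j : MvPolynomial σ R) ≠ 0 := by
  classical
  obtain ⟨j, hj⟩ := hS
  intro h
  have := congrArg (coeff (Finsupp.single j 1)) h
  simp [coeff_sum, coeff_X, Finsupp.single_left_inj, hj] at this

end MvPolynomial

namespace Multigraph

variable {V E : Type} (G : Multigraph V E)

theorem subSimple_insideEdges_induce (S : Finset V) :
    (G.subSimple (G.insideEdges S)).induce (S : Set V) = G.simple.induce (S : Set V) := by
  ext u v
  refine ⟨fun ⟨hne, e, _, hu, hv⟩ => ⟨hne, e, hu, hv⟩, fun ⟨hne, e, hu, hv⟩ => ⟨hne, e, ?_, hu, hv⟩⟩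
  have hends : G.ends e = s((u : V), (v : V)) := (Sym2.mem_and_mem_iff hne).mp ⟨hu, hv⟩
  intro w hw
  rw [hends, Sym2.mem_iff] at hw
  rcases hw with rfl | rfl
  exacts [u.2, v.2]

variable [Fintype V]

theorem IsBreakDivisor.inducedGenus_le_sum [Fintype E] {G : Multigraph V E} {D : V → ℤ}
    (hD : G.IsBreakDivisor D) {S : Finset V} (hS : (G.simple.induce (S : Set V)).Connected) :
    G.inducedGenus S ≤ ∑ v ∈ S, D v :=
  hD.2.2 S _ (fun _ he => he) ((G.subSimple_insideEdges_induce S).symm ▸ hS)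

variable [DecidableEq V]

theorem disjoint_insideEdges_compl (S : Finset V) :
    Disjoint (G.insideEdges S) (G.insideEdges Sᶜ) :=
  Set.disjoint_left.mpr fun _ hS hSc =>
    Finset.mem_compl.mp (hSc _ (Sym2.out_fst_mem _)) (hS _ (Sym2.out_fst_mem _))

theorem compl_insideEdges_union_insideEdges_compl (S : Finset V) :
    (G.insideEdges S ∪ G.insideEdges Sᶜ)ᶜ = G.cutEdges S := by
  ext e
  simp [insideEdges, cutEdges, and_comm]

theorem card_eq_ncard_insideEdges_add_ncard_cutEdges [Fintype E] (S : Finset V) :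
    Fintype.card E =
      (G.insideEdges S).ncard + (G.insideEdges Sᶜ).ncard + (G.cutEdges S).ncard := by
  rw [← Set.ncard_union_eq (G.disjoint_insideEdges_compl S),
    ← compl_insideEdges_union_insideEdges_compl, Set.ncard_add_ncard_compl,
    Nat.card_eq_fintype_card]

theorem genus_sub_inducedGenus_compl_sub_inducedGenus [Fintype E] (S : Finset V) :
    G.genus - G.inducedGenus Sᶜ - G.inducedGenus S + 1 = (G.cutEdges S).ncard := by
  have hE := G.card_eq_ncard_insideEdges_add_ncard_cutEdges S
  have hV := Finset.card_add_card_compl S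
  simp only [genus, inducedGenus]
  omega

theorem IsBreakDivisor.sum_le_genus_sub_inducedGenus_compl [Fintype E] {G : Multigraph V E}
    {D : V → ℤ} (hD : G.IsBreakDivisor D) {S : Finset V}
    (hSc : (G.simple.induce ((Sᶜ : Finset V) : Set V)).Connected) :
    ∑ v ∈ S, D v ≤ G.genus - G.inducedGenus Sᶜ := by
  have hsum : ∑ v ∈ S, D v + ∑ v ∈ Sᶜ, D v = G.genus := by
    rw [Finset.sum_add_sum_compl, hD.2.1]
  linarith [hD.inducedGenus_le_sum hSc]

end Multigraph

open MvPolynomial in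
theorem bond_polynomial_vanishes_general {E : Type} [Fintype E] (n : ℕ)
    (G : Multigraph (Fin n) E)
    (S : Finset (Fin n)) (hS : S.Nonempty)
    (hconnS : (G.simple.induce (S : Set (Fin n))).Connected)
    (hconnSc : (G.simple.induce ((Sᶜ : Finset (Fin n)) : Set (Fin n))).Connected) :
    (∀ D : Fin n → ℤ, G.IsBreakDivisor D →
      eval (fun j => (D j : ℚ))
        (∏ i ∈ Finset.Icc (G.inducedGenus S) (G.genus - G.inducedGenus Sᶜ),
          ((∑ j ∈ S, X j) - C (i : ℚ))) = 0) ∧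
    homogeneousComponent
        (∏ i ∈ Finset.Icc (G.inducedGenus S) (G.genus - G.inducedGenus Sᶜ),
          ((∑ j ∈ S, X j) - C (i : ℚ)) : MvPolynomial (Fin n) ℚ).totalDegree
        (∏ i ∈ Finset.Icc (G.inducedGenus S) (G.genus - G.inducedGenus Sᶜ),
          ((∑ j ∈ S, X j) - C (i : ℚ))) =
      (∑ j ∈ S, X j) ^ (G.cutEdges S).ncard := by
  refine ⟨fun D hD => ?_, ?_⟩
  · have hmem : ∑ v ∈ S, D v ∈ Finset.Icc (G.inducedGenus S) (G.genus - G.inducedGenus Sᶜ) :=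
      Finset.mem_Icc.mpr
        ⟨hD.inducedGenus_le_sum hconnS, hD.sum_le_genus_sub_inducedGenus_compl hconnSc⟩
    rw [map_prod]
    exact Finset.prod_eq_zero hmem (by simp)
  · have hcard : (Finset.Icc (G.inducedGenus S) (G.genus - G.inducedGenus Sᶜ)).card =
        (G.cutEdges S).ncard := by
      have := G.genus_sub_inducedGenus_compl_sub_inducedGenus S
      rw [Int.card_Icc]
      omega
    rw [totalDegree_prod_sub_C (isHomogeneous_sum_X S) (sum_X_ne_zero hS),
      homogeneousComponent_card_prod_sub_C (isHomogeneous_sum_X S), hcard]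

open MvPolynomial in
/-- For a bond `∂(S)`, the polynomial `∏_{i=g(G[S])}^{g(G)−g(G[S̄])} (x_S − i)`
vanishes on all break divisors of `G`, and its top-degree homogeneous
component is `x_S^{d(S)}`. -/
theorem bond_polynomial_vanishes {E : Type} [Fintype E] (n : ℕ)
    (G : Multigraph (Fin n) E) (hG : G.simple.Connected)
    (S : Finset (Fin n)) (hS : S.Nonempty) (hSne : S ≠ Finset.univ)
    (hconnS : (G.simple.induce (S : Set (Fin n))).Connected)
    (hconnSc : (G.simple.induce ((Sᶜ : Finset (Fin n)) : Set (Fin n))).Connected) :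
    (∀ D : Fin n → ℤ, G.IsBreakDivisor D →
      eval (fun j => (D j : ℚ))
        (∏ i ∈ Finset.Icc (G.inducedGenus S) (G.genus - G.inducedGenus Sᶜ),
          ((∑ j ∈ S, X j) - C (i : ℚ))) = 0) ∧
    homogeneousComponent
        (∏ i ∈ Finset.Icc (G.inducedGenus S) (G.genus - G.inducedGenus Sᶜ),
          ((∑ j ∈ S, X j) - C (i : ℚ)) : MvPolynomial (Fin n) ℚ).totalDegree
        (∏ i ∈ Finset.Icc (G.inducedGenus S) (G.genus - G.inducedGenus Sᶜ),
          ((∑ j ∈ S, X j) - C (i : ℚ))) =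
      (∑ j ∈ S, X j) ^ (G.cutEdges S).ncard :=
  bond_polynomial_vanishes_general n G S hS hconnS hconnSc
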